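/- Let $\alpha = \{\alpha_n\}_{n=0}^\infty$ be a strictly increasing sequence of positive reals, and define $u_n = \alpha_n^2 - \alpha_{n-1}^2$, $v_n = \alpha_n^2\alpha_{n+1}^2 - \alpha_{n-1}^2\alpha_{n-2}^2$, $w_n = \alpha_n^2(\alpha_{n+1}^2-\alpha_{n-1}^2)^2$ (with $\alpha_{-1}=\alpha_{-2}=0$), and $p_n = u_n v_{n+1} - w_n$. Then the weighted shift $W_\alpha$ is 2-hyponormal if and only if $p_n \ge 0$ for all $n \ge 0$. -/

import Mathlib

/-!
The `3 × 3` Hankel moment matrix `H n = (γ_{n+i+j})` has leading entry `γ_n > 0` and leading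
`2 × 2` minor `γ_n² α_n² (α_{n+1}² - α_n²) > 0`, so by the Cholesky (LDLᵀ) decomposition it is
positive semidefinite exactly when its determinant is nonnegative. Expanding the moments as products
of weights, `det H n = γ_n³ α_n⁴ α_{n+1}² p_{n+1}`. Hence 2-hyponormality is equivalent to
`p_{n+1} ≥ 0` for all `n`, while `p_0 = α_0² α_1² (α_2² - α_1²)` is positive for every increasing
weight sequence.
-/

/-- The moments `γ n = α₀² ⋯ α_{n-1}²` of a weighted shift. -/
noncomputable def gam (α : ℕ → ℝ) (n : ℕ) : ℝ := ∏ k ∈ Finset.range n, α k ^ 2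

/-- `W_α` is `k`-hyponormal iff all `(k+1) × (k+1)` Hankel moment matrices are PSD. -/
def KHyponormal (k : ℕ) (α : ℕ → ℝ) : Prop :=
  ∀ n : ℕ, (Matrix.of fun i j : Fin (k + 1) => gam α (n + i + j)).PosSemidef

/-- Extension of the weight sequence by `α₋₁ = α₋₂ = 0`. -/
noncomputable def ae (α : ℕ → ℝ) : ℤ → ℝ := fun n => if 0 ≤ n then α n.toNat else 0

noncomputable def uu (α : ℕ → ℝ) (n : ℕ) : ℝ := ae α n ^ 2 - ae α ((n : ℤ) - 1) ^ 2

noncomputable def vv (α : ℕ → ℝ) (n : ℕ) : ℝ :=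
  ae α n ^ 2 * ae α ((n : ℤ) + 1) ^ 2 - ae α ((n : ℤ) - 1) ^ 2 * ae α ((n : ℤ) - 2) ^ 2

noncomputable def ww (α : ℕ → ℝ) (n : ℕ) : ℝ :=
  ae α n ^ 2 * (ae α ((n : ℤ) + 1) ^ 2 - ae α ((n : ℤ) - 1) ^ 2) ^ 2

noncomputable def pp (α : ℕ → ℝ) (n : ℕ) : ℝ := uu α n * vv α (n + 1) - ww α n

namespace Matrix

theorem posSemidef_fin_three_of_det_nonneg {a b c d e f : ℝ} (ha : 0 < a)
    (hab : 0 < a * d - b ^ 2) (hdet : 0 ≤ !![a, b, c; b, d, e; c, e, f].det) :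
    !![a, b, c; b, d, e; c, e, f].PosSemidef := by
  refine posSemidef_iff_dotProduct_mulVec.mpr ⟨?_, fun x => ?_⟩
  · ext i j; fin_cases i <;> fin_cases j <;> rfl
  have cholesky : a * (a * d - b ^ 2) * (star x ⬝ᵥ !![a, b, c; b, d, e; c, e, f] *ᵥ x) =
      (a * d - b ^ 2) * (a * x 0 + b * x 1 + c * x 2) ^ 2
        + ((a * d - b ^ 2) * x 1 + (a * e - b * c) * x 2) ^ 2
        + a * !![a, b, c; b, d, e; c, e, f].det * x 2 ^ 2 := by
    simp only [dotProduct, Pi.star_apply, star_trivial, cons_mulVec, Fin.sum_univ_three,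
      cons_val_zero, cons_val_one, cons_val, empty_mulVec, det_fin_three, of_apply, cons_val',
      cons_val_fin_one]
    ring
  refine nonneg_of_mul_nonneg_right ?_ (mul_pos ha hab)
  rw [cholesky]
  have := mul_nonneg hab.le (sq_nonneg (a * x 0 + b * x 1 + c * x 2))
  have := mul_nonneg (mul_nonneg ha.le hdet) (sq_nonneg (x 2))
  positivity

theorem posSemidef_fin_three_iff_det_nonneg {a b c d e f : ℝ} (ha : 0 < a)
    (hab : 0 < a * d - b ^ 2) :
    !![a, b, c; b, d, e; c, e, f].PosSemidef ↔ 0 ≤ !![a, b, c; b, d, e; c, e, f].det :=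
  ⟨PosSemidef.det_nonneg, posSemidef_fin_three_of_det_nonneg ha hab⟩

end Matrix

section WeightedShift

variable (α : ℕ → ℝ)

lemma gam_succ (n : ℕ) : gam α (n + 1) = gam α n * α n ^ 2 :=
  Finset.prod_range_succ _ _

lemma gam_pos {α : ℕ → ℝ} (hpos : ∀ n, 0 < α n) (n : ℕ) : 0 < gam α n :=
  Finset.prod_pos fun k _ => pow_pos (hpos k) 2

lemma ae_natCast (m : ℕ) : ae α m = α m := by simp [ae]

lemma pp_zero : pp α 0 = α 0 ^ 2 * α 1 ^ 2 * (α 2 ^ 2 - α 1 ^ 2) := by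
  simp [pp, uu, vv, ww, ae, mul_sub, mul_assoc, sq]

lemma pp_succ (n : ℕ) :
    pp α (n + 1) =
      (α (n + 1) ^ 2 - α n ^ 2) * (α (n + 2) ^ 2 * α (n + 3) ^ 2 - α (n + 1) ^ 2 * α n ^ 2)
        - α (n + 1) ^ 2 * (α (n + 2) ^ 2 - α n ^ 2) ^ 2 := by
  have h₁ : ((n + 1 : ℕ) : ℤ) - 1 = n := by push_cast; ring
  have h₂ : ((n + 1 : ℕ) : ℤ) + 1 = (n + 2 : ℕ) := by push_cast; ring
  have h₃ : ((n + 2 : ℕ) : ℤ) + 1 = (n + 3 : ℕ) := by push_cast; ring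
  have h₄ : ((n + 2 : ℕ) : ℤ) - 1 = (n + 1 : ℕ) := by push_cast; ring
  have h₅ : ((n + 2 : ℕ) : ℤ) - 2 = n := by push_cast; ring
  simp only [pp, uu, vv, ww, h₁, h₂, h₃, h₄, h₅, ae_natCast]

lemma pp_zero_nonneg (h : α 1 ^ 2 ≤ α 2 ^ 2) : 0 ≤ pp α 0 := by
  rw [pp_zero]
  exact mul_nonneg (by positivity) (sub_nonneg.mpr h)

lemma hankel_eq (n : ℕ) :
    Matrix.of (fun i j : Fin 3 => gam α (n + i + j)) =
      !![gam α n, gam α (n + 1), gam α (n + 2);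
        gam α (n + 1), gam α (n + 2), gam α (n + 3);
        gam α (n + 2), gam α (n + 3), gam α (n + 4)] := by
  ext i j; fin_cases i <;> fin_cases j <;> rfl

lemma hankel_minor_two (n : ℕ) :
    gam α n * gam α (n + 2) - gam α (n + 1) ^ 2 =
      gam α n ^ 2 * α n ^ 2 * (α (n + 1) ^ 2 - α n ^ 2) := by
  simp only [gam_succ]
  ring

lemma hankel_det (n : ℕ) :
    (Matrix.of fun i j : Fin 3 => gam α (n + i + j)).det =
      gam α n ^ 3 * α n ^ 4 * α (n + 1) ^ 2 * pp α (n + 1) := by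
  rw [hankel_eq, Matrix.det_fin_three, pp_succ]
  simp only [gam_succ, Matrix.of_apply, Matrix.cons_val', Matrix.cons_val_zero,
    Matrix.cons_val_fin_one, Matrix.cons_val_one, Matrix.cons_val]
  ring

lemma hankel_posSemidef_iff {α : ℕ → ℝ} (hpos : ∀ n, 0 < α n) {n : ℕ}
    (hlt : α n ^ 2 < α (n + 1) ^ 2) :
    (Matrix.of fun i j : Fin 3 => gam α (n + i + j)).PosSemidef ↔ 0 ≤ pp α (n + 1) := by
  have hγ := gam_pos hpos n
  have hminor : 0 < gam α n * gam α (n + 2) - gam α (n + 1) ^ 2 := by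
    rw [hankel_minor_two]
    have := hpos n
    have := sub_pos.mpr hlt
    positivity
  have hfactor : 0 < gam α n ^ 3 * α n ^ 4 * α (n + 1) ^ 2 := by
    have := hpos n
    have := hpos (n + 1)
    positivity
  rw [← mul_nonneg_iff_of_pos_left hfactor, ← hankel_det, hankel_eq,
    Matrix.posSemidef_fin_three_iff_det_nonneg hγ hminor]

end WeightedShift

theorem stmt_4 (α : ℕ → ℝ) (hpos : ∀ n, 0 < α n) (hmono : StrictMono α) :
    KHyponormal 2 α ↔ ∀ n : ℕ, 0 ≤ pp α n := by
  have hsq (n : ℕ) : α n ^ 2 < α (n + 1) ^ 2 :=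
    pow_lt_pow_left₀ (hmono n.lt_succ_self) (hpos n).le two_ne_zero
  rw [← Nat.and_forall_add_one]
  simp only [KHyponormal, hankel_posSemidef_iff hpos (hsq _)]
  exact ⟨fun h => ⟨pp_zero_nonneg α (hsq 1).le, h⟩, And.right⟩
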